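/- Let n be a positive integer, d > 0, and c a real number with |c| ≤ d. Let B = (d/(2n))·𝟙𝟙ᵀ + (c/(2n))·χχᵀ, and let D be a 2n×2n diagonal matrix with nonnegative diagonal entries d_1,…,d_{2n} satisfying ∑_{j=1}^{2n} (sqrt(d) − sqrt(d_j))² ≤ 2n. Then ‖B − (1/sqrt(d))·B·D^{1/2}‖ ≤ 2·sqrt(d). -/

import Mathlib

/-!
Factoring out `1/√d` gives `B - (1/√d)·B·D^{1/2} = (1/√d)·B·diag(w)` with `w_j = √d - √d_j`, and
`B·diag(w) = (d/2n)·𝟙(w)ᵀ + (c/2n)·χ(χ∘w)ᵀ` is a sum of two rank-one matrices. A rank-one matrix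
`u vᵀ` has spectral norm `‖u‖‖v‖`; here `‖𝟙‖ = ‖χ‖ = √(2n)` and `‖χ∘w‖ = ‖w‖ ≤ √(2n)` by the
hypothesis on the `d_j`. So the norm is at most `(d + |c|)/√d ≤ 2√d`.
-/

/-- The spectral norm (ℓ²-operator norm) of a square real matrix. -/
noncomputable def specNorm {m : ℕ} (M : Matrix (Fin m) (Fin m) ℝ) : ℝ :=
  ‖Matrix.toEuclideanCLM (𝕜 := ℝ) M‖

/-- The partition indicator vector `χ`: `+1` on the first community, `-1` on the second. -/
noncomputable def chi (n : ℕ) (i : Fin (2*n)) : ℝ := if i.val < n then 1 else -1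

open Matrix WithLp

lemma specNorm_add_le {m : ℕ} (A C : Matrix (Fin m) (Fin m) ℝ) :
    specNorm (A + C) ≤ specNorm A + specNorm C := by
  simpa only [specNorm, map_add] using norm_add_le _ _

lemma specNorm_smul {m : ℕ} (a : ℝ) (A : Matrix (Fin m) (Fin m) ℝ) :
    specNorm (a • A) = |a| * specNorm A := by
  rw [specNorm, specNorm, map_smul, norm_smul, Real.norm_eq_abs]

lemma specNorm_vecMulVec {m : ℕ} (u v : Fin m → ℝ) :
    specNorm (vecMulVec u v) = ‖toLp 2 u‖ * ‖toLp 2 v‖ := by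
  have h_rankOne : toEuclideanCLM (𝕜 := ℝ) (vecMulVec u v)
      = InnerProductSpace.rankOne ℝ (toLp 2 u) (toLp 2 v) := by
    apply ContinuousLinearMap.coe_injective
    rw [coe_toEuclideanCLM_eq_toEuclideanLin, ← LinearEquiv.eq_symm_apply,
      InnerProductSpace.symm_toEuclideanLin_rankOne]
    rfl
  rw [specNorm, h_rankOne, InnerProductSpace.norm_rankOne]

lemma vecMulVec_mul_diagonal {l m R : Type*} [Fintype m] [DecidableEq m] [CommSemiring R]
    (u : l → R) (v w : m → R) : vecMulVec u v * diagonal w = vecMulVec u (v * w) := by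
  rw [vecMulVec_mul]
  congr 1
  ext j
  exact vecMul_diagonal v w j

lemma sub_inv_smul_mul_diagonal {m n K : Type*} [Fintype n] [DecidableEq n] [Field K]
    (A : Matrix m n K) {s : K} (hs : s ≠ 0) (e : n → K) :
    A - s⁻¹ • (A * diagonal e) = s⁻¹ • (A * diagonal (fun j => s - e j)) := by
  ext i j
  simp only [Matrix.sub_apply, Matrix.smul_apply, mul_diagonal, smul_eq_mul]
  field_simp

lemma norm_toLp_mul_of_abs_eq_one {ι : Type*} [Fintype ι] {u : ι → ℝ} (hu : ∀ i, |u i| = 1)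
    (w : ι → ℝ) : ‖toLp 2 (u * w)‖ = ‖toLp 2 w‖ := by
  simp [EuclideanSpace.norm_eq, hu]

lemma norm_toLp_one {ι : Type*} [Fintype ι] : ‖toLp 2 (1 : ι → ℝ)‖ = √(Fintype.card ι) := by
  simp [EuclideanSpace.norm_eq]

lemma abs_chi (n : ℕ) (i : Fin (2 * n)) : |chi n i| = 1 := by
  unfold chi; split_ifs <;> simp

lemma specNorm_vecMulVec_self_mul_diagonal {m : ℕ} {u : Fin m → ℝ} (hu : ∀ i, |u i| = 1)
    (w : Fin m → ℝ) : specNorm (vecMulVec u u * diagonal w) = √m * ‖toLp 2 w‖ := by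
  have hu_norm : ‖toLp 2 u‖ = √m := by
    simpa using (norm_toLp_mul_of_abs_eq_one hu 1).trans norm_toLp_one
  rw [vecMulVec_mul_diagonal, specNorm_vecMulVec, norm_toLp_mul_of_abs_eq_one hu, hu_norm]

lemma specNorm_rankTwo_mul_diagonal_le {n : ℕ} (hn : 0 < n) (d c : ℝ) {w : Fin (2 * n) → ℝ}
    (hw : ‖toLp 2 w‖ ≤ √(2 * n)) :
    specNorm (((d / (2 * n)) • vecMulVec (fun _ => (1 : ℝ)) (fun _ => (1 : ℝ))
        + (c / (2 * n)) • vecMulVec (chi n) (chi n)) * diagonal w) ≤ |d| + |c| := by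
  have hN : (0 : ℝ) < 2 * n := by positivity
  have h_one := specNorm_vecMulVec_self_mul_diagonal (u := fun _ => (1 : ℝ)) (by simp) w
  have h_chi := specNorm_vecMulVec_self_mul_diagonal (abs_chi n) w
  push_cast at h_one h_chi
  rw [add_mul, smul_mul, smul_mul]
  calc _ ≤ |d / (2 * n)| * (√(2 * n) * ‖toLp 2 w‖)
        + |c / (2 * n)| * (√(2 * n) * ‖toLp 2 w‖) := by
        refine (specNorm_add_le _ _).trans_eq ?_
        rw [specNorm_smul, specNorm_smul, h_one, h_chi]
    _ ≤ |d / (2 * n)| * (√(2 * n) * √(2 * n)) + |c / (2 * n)| * (√(2 * n) * √(2 * n)) := by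
        gcongr
    _ = |d| + |c| := by
        rw [Real.mul_self_sqrt hN.le, abs_div, abs_div, abs_of_pos hN]
        field_simp

theorem stmt13_general (n : ℕ) (hn : 0 < n) (d c : ℝ) (hd : 0 < d) (hc : |c| ≤ d)
    (B : Matrix (Fin (2*n)) (Fin (2*n)) ℝ)
    (hB : B = (d / (2*n)) • Matrix.vecMulVec (fun _ => (1:ℝ)) (fun _ => (1:ℝ))
        + (c / (2*n)) • Matrix.vecMulVec (chi n) (chi n))
    (dv : Fin (2*n) → ℝ)
    (hsum : ∑ j, (Real.sqrt d - Real.sqrt (dv j)) ^ 2 ≤ 2 * n) :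
    specNorm (B - (1 / Real.sqrt d) • (B * Matrix.diagonal fun j => Real.sqrt (dv j)))
      ≤ 2 * Real.sqrt d := by
  have hsd : 0 < √d := Real.sqrt_pos.mpr hd
  set w : Fin (2 * n) → ℝ := fun j => √d - √(dv j)
  have hw : ‖toLp 2 w‖ ≤ √(2 * n) := by
    rw [EuclideanSpace.norm_eq]
    gcongr
    simpa [w] using hsum
  rw [one_div, sub_inv_smul_mul_diagonal B hsd.ne', specNorm_smul, abs_inv, abs_of_pos hsd]
  calc (√d)⁻¹ * specNorm (B * diagonal w) ≤ (√d)⁻¹ * (2 * d) := by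
        gcongr
        rw [hB]
        refine (specNorm_rankTwo_mul_diagonal_le hn d c hw).trans ?_
        rw [abs_of_pos hd]
        linarith
    _ = 2 * √d := by rw [← div_eq_inv_mul, mul_div_assoc, Real.div_sqrt]

/-- Let `B = (d/(2n))·𝟙𝟙ᵀ + (c/(2n))·χχᵀ` with `|c| ≤ d`, and let `D`
be diagonal with nonnegative entries `d_j` satisfying `∑_j (√d - √(d_j))² ≤ 2n`.
Then `‖B - (1/√d)·B·D^{1/2}‖ ≤ 2·√d`. -/
theorem stmt13 (n : ℕ) (hn : 0 < n) (d c : ℝ) (hd : 0 < d) (hc : |c| ≤ d)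
    (B : Matrix (Fin (2*n)) (Fin (2*n)) ℝ)
    (hB : B = (d / (2*n)) • Matrix.vecMulVec (fun _ => (1:ℝ)) (fun _ => (1:ℝ))
        + (c / (2*n)) • Matrix.vecMulVec (chi n) (chi n))
    (dv : Fin (2*n) → ℝ) (hdv : ∀ j, 0 ≤ dv j)
    (hsum : ∑ j, (Real.sqrt d - Real.sqrt (dv j)) ^ 2 ≤ 2 * n) :
    specNorm (B - (1 / Real.sqrt d) • (B * Matrix.diagonal fun j => Real.sqrt (dv j)))
      ≤ 2 * Real.sqrt d :=
  stmt13_general n hn d c hd hc B hB dv hsum
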